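/- arXiv:2210.15744 — 2 statements merged into one kernel-verified Lean document; each statement's English description precedes it below -/
import Mathlib

section
/- The unit vector basis of Ti(p,γ) is 1-subsymmetric: for every strictly increasing map π : ℕ → ℕ and every a ∈ c₀₀, the vector b defined by b_{π(n)} = aₙ and b_k = 0 for k ∉ range(π) satisfies ‖b‖ = ‖a‖. -/
/-!
Write `b` for the spread of `a` along the order embedding `f`, and induct on the size of the
support of `a`. A family `E₁ < ⋯ < Eₙ` with a piece containing the whole support contributes at
most `γ ‖a‖`, which `γ < 1` makes irrelevant in the implicit equation; every other piece has
strictly smaller support. Such pieces of `b` are spreads of the pieces `f⁻¹(Eⱼ)` of `a`, and pieces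
of `a` spread to pieces `f(Fⱼ)` of `b`, so by induction both implicit suprema bound each other.
Empty preimages are dropped, which only shortens the family and so increases `∑/n^{1/q}`. The
implicit equation alone also yields `‖0‖ = 0` and `‖a‖ ≤ ‖a‖₁`, the latter making the suprema
finite.
-/

open Finset

noncomputable section

/-- Coordinate restriction `E a` of a finitely supported sequence `a` to the finite set `E`. -/
def restr (E : Finset ℕ) (a : ℕ →₀ ℝ) : ℕ →₀ ℝ := a.filter (· ∈ E)

/-- `E₁ < E₂ < ⋯ < Eₙ`: a family of nonempty finite sets of naturals which are consecutive. -/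
def Consec {n : ℕ} (E : Fin n → Finset ℕ) : Prop :=
  (∀ j, (E j).Nonempty) ∧ ∀ i j : Fin n, i < j → ∀ s ∈ E i, ∀ t ∈ E j, s < t

/-- The set of quantities `γ·(∑ⱼ N(Eⱼ a))/n^{1/q}` over all consecutive families `E₁ < ⋯ < Eₙ`. -/
def tiSet (q γ : ℝ) (N : (ℕ →₀ ℝ) → ℝ) (a : ℕ →₀ ℝ) : Set ℝ :=
  {x | ∃ n : ℕ, 0 < n ∧ ∃ E : Fin n → Finset ℕ, Consec E ∧
    x = γ * (∑ j, N (restr (E j) a)) / (n : ℝ) ^ (1 / q)}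

/-- `N` satisfies the implicit equation defining the norm of the Tirilman space `Ti(p,γ)`:
`‖a‖ = max {‖a‖_∞, γ·sup (∑ⱼ ‖Eⱼ a‖)/n^{1/q}}`. -/
def TiEq (q γ : ℝ) (N : (ℕ →₀ ℝ) → ℝ) : Prop :=
  ∀ a : ℕ →₀ ℝ, N a = max (⨆ i, |a i|) (sSup (tiSet q γ N a))

/-- Finitely many finitely supported vectors have consecutive supports. -/
def ConsecSupp {n : ℕ} (x : Fin n → (ℕ →₀ ℝ)) : Prop :=
  ∀ i j : Fin n, i < j → ∀ s ∈ (x i).support, ∀ t ∈ (x j).support, s < t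

/-- A sequence of finitely supported vectors with consecutive supports. -/
def ConsecSuppSeq (x : ℕ → (ℕ →₀ ℝ)) : Prop :=
  ∀ i j : ℕ, i < j → ∀ s ∈ (x i).support, ∀ t ∈ (x j).support, s < t

/-- The dual norm on `Ti^*(p,γ)` of the functional with coefficient vector `c`:
the supremum of `∑ᵢ cᵢ aᵢ` over the unit ball of the Tirilman norm `N`. -/
def dualN (N : (ℕ →₀ ℝ) → ℝ) (c : ℕ →₀ ℝ) : ℝ :=
  sSup {x | ∃ a : ℕ →₀ ℝ, N a ≤ 1 ∧ x = ∑ i ∈ c.support, c i * a i}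

lemma restr_apply (E : Finset ℕ) (a : ℕ →₀ ℝ) (i : ℕ) :
    restr E a i = if i ∈ E then a i else 0 :=
  Finsupp.filter_apply _ _ _

lemma support_restr (E : Finset ℕ) (a : ℕ →₀ ℝ) :
    (restr E a).support = a.support.filter (· ∈ E) :=
  Finsupp.support_filter _ _

lemma restr_zero (E : Finset ℕ) : restr E 0 = 0 :=
  Finsupp.filter_zero _

lemma restr_eq_self_of_support_subset {E : Finset ℕ} {a : ℕ →₀ ℝ} (h : a.support ⊆ E) :
    restr E a = a :=
  (Finsupp.filter_eq_self_iff _ _).2 fun _ hi => h (Finsupp.mem_support_iff.2 hi)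

lemma restr_eq_zero_of_disjoint {E : Finset ℕ} {a : ℕ →₀ ℝ} (h : Disjoint a.support E) :
    restr E a = 0 :=
  (Finsupp.filter_eq_zero_iff _ _).2 fun _ hi =>
    Finsupp.notMem_support_iff.1 (Finset.disjoint_right.1 h hi)

lemma card_support_restr_lt {E : Finset ℕ} {a : ℕ →₀ ℝ} (h : ¬ a.support ⊆ E) :
    #(restr E a).support < #a.support := by
  rw [support_restr]
  exact card_lt_card (filter_ssubset.2 (by simpa [not_subset] using h))

lemma restr_embDomain (f : ℕ ↪ ℕ) (E : Finset ℕ) (a : ℕ →₀ ℝ) :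
    restr E (a.embDomain f) = (restr (E.preimage f f.injective.injOn) a).embDomain f := by
  ext k
  by_cases hk : k ∈ Set.range f
  · obtain ⟨m, rfl⟩ := hk
    simp [restr_apply, Finsupp.embDomain_apply_self]
  · simp [restr_apply, Finsupp.embDomain_of_notMem_range _ _ _ hk]

lemma abs_apply_le_sum_abs (a : ℕ →₀ ℝ) (i : ℕ) : |a i| ≤ ∑ j ∈ a.support, |a j| := by
  by_cases hi : i ∈ a.support
  · exact single_le_sum (fun j _ => abs_nonneg (a j)) hi
  · rw [Finsupp.notMem_support_iff.1 hi, abs_zero]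
    exact sum_nonneg fun j _ => abs_nonneg (a j)

lemma bddAbove_range_abs (a : ℕ →₀ ℝ) : BddAbove (Set.range fun i => |a i|) :=
  ⟨_, Set.forall_mem_range.2 (abs_apply_le_sum_abs a)⟩

lemma iSup_abs_embDomain (f : ℕ ↪ ℕ) (a : ℕ →₀ ℝ) :
    ⨆ i, |a.embDomain f i| = ⨆ i, |a i| := by
  apply le_antisymm
  · refine ciSup_le fun k => ?_
    by_cases hk : k ∈ Set.range f
    · obtain ⟨m, rfl⟩ := hk
      rw [Finsupp.embDomain_apply_self]
      exact le_ciSup (bddAbove_range_abs a) m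
    · rw [Finsupp.embDomain_of_notMem_range _ _ _ hk, abs_zero]
      exact Real.iSup_nonneg fun i => abs_nonneg (a i)
  · refine ciSup_le fun m => ?_
    rw [← Finsupp.embDomain_apply_self f a m]
    exact le_ciSup (bddAbove_range_abs _) (f m)

lemma sum_sum_abs_restr_le {ι : Type*} (s : Finset ι) {E : ι → Finset ℕ}
    (hE : (s : Set ι).PairwiseDisjoint E) (a : ℕ →₀ ℝ) :
    ∑ j ∈ s, ∑ i ∈ (restr (E j) a).support, |restr (E j) a i| ≤ ∑ i ∈ a.support, |a i| := by
  classical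
  have hpiece (j : ι) : ∑ i ∈ (restr (E j) a).support, |restr (E j) a i|
      = ∑ i ∈ a.support.filter (· ∈ E j), |a i| := by
    rw [support_restr]
    exact sum_congr rfl fun i hi => by rw [restr_apply, if_pos (mem_filter.1 hi).2]
  have hdisj : (s : Set ι).PairwiseDisjoint fun j => a.support.filter (· ∈ E j) :=
    hE.mono fun j _ hi => (mem_filter.1 hi).2
  rw [sum_congr rfl fun j _ => hpiece j, ← sum_biUnion hdisj]
  exact sum_le_sum_of_subset_of_nonneg (biUnion_subset.2 fun j _ => filter_subset _ _)
    fun i _ _ => abs_nonneg (a i)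

lemma Consec.disjoint {n : ℕ} {E : Fin n → Finset ℕ} (hE : Consec E) {i j : Fin n}
    (hij : i ≠ j) : Disjoint (E i) (E j) := by
  rw [Finset.disjoint_left]
  intro s hi hj
  rcases hij.lt_or_gt with h | h
  · exact lt_irrefl s (hE.2 i j h s hi s hj)
  · exact lt_irrefl s (hE.2 j i h s hj s hi)

lemma consec_singleton (n : ℕ) : Consec fun j : Fin n => ({(j : ℕ)} : Finset ℕ) :=
  ⟨fun j => singleton_nonempty _, fun i j hij s hs t ht => by
    rw [mem_singleton] at hs ht
    subst hs ht
    exact hij⟩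

lemma div_rpow_le_self {x r : ℝ} (hx : 0 ≤ x) (hr : 0 ≤ r) {n : ℕ} (hn : 0 < n) :
    x / (n : ℝ) ^ r ≤ x :=
  div_le_self hx (Real.one_le_rpow (by exact_mod_cast hn) hr)

namespace TiEq

variable {q γ : ℝ} {N : (ℕ →₀ ℝ) → ℝ}

lemma iSup_abs_le (hN : TiEq q γ N) (a : ℕ →₀ ℝ) : ⨆ i, |a i| ≤ N a :=
  (hN a).symm ▸ le_max_left _ _

lemma nonneg (hN : TiEq q γ N) (a : ℕ →₀ ℝ) : 0 ≤ N a :=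
  (Real.iSup_nonneg fun i => abs_nonneg (a i)).trans (hN.iSup_abs_le a)

lemma map_zero (hN : TiEq q γ N) (hq₁ : 1 / q < 1) (hγ₀ : 0 < γ) : N 0 = 0 := by
  by_contra hne
  have hpos : 0 < N 0 := (hN.nonneg 0).lt_of_ne' hne
  have hsSup : sSup (tiSet q γ N 0) = N 0 := by
    have h := hN 0
    simp only [Finsupp.coe_zero, Pi.zero_apply, abs_zero, ciSup_const] at h
    rcases max_choice 0 (sSup (tiSet q γ N 0)) with h' | h' <;> rw [h'] at h <;> linarith
  have hbdd : BddAbove (tiSet q γ N 0) := by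
    by_contra h
    rw [Real.sSup_of_not_bddAbove h] at hsSup
    exact hpos.ne hsSup
  -- the `n` singletons put `γ N(0) n^{1 - 1/q} → ∞` into `tiSet q γ N 0`, whose supremum is `N 0`
  have hmem (n : ℕ) (hn : 0 < n) :
      γ * N 0 * (n : ℝ) ^ (1 - 1 / q) ∈ tiSet q γ N 0 := by
    refine ⟨n, hn, _, consec_singleton n, ?_⟩
    have hn' : (0 : ℝ) < n := Nat.cast_pos.2 hn
    simp only [restr_zero, sum_const, card_univ, Fintype.card_fin, nsmul_eq_mul,
      Real.rpow_sub hn', Real.rpow_one]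
    ring
  have hlarge : ∀ᶠ n : ℕ in Filter.atTop, 0 < n ∧ 1 / γ < (n : ℝ) ^ (1 - 1 / q) :=
    (Filter.eventually_gt_atTop 0).and
      (((tendsto_rpow_atTop (by linarith)).comp tendsto_natCast_atTop_atTop).eventually_gt_atTop _)
  obtain ⟨n, hn, hn'⟩ := hlarge.exists
  have hle : γ * N 0 * (n : ℝ) ^ (1 - 1 / q) ≤ N 0 := (le_csSup hbdd (hmem n hn)).trans hsSup.le
  have hγn : 1 < γ * (n : ℝ) ^ (1 - 1 / q) := by rwa [div_lt_iff₀' hγ₀] at hn'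
  nlinarith

lemma le_max_of_forall_proper (hN : TiEq q γ N) (hq₀ : 0 ≤ 1 / q) (hq₁ : 1 / q < 1) (hγ₀ : 0 < γ)
    (hγ₁ : γ < 1) (a : ℕ →₀ ℝ) (c : ℝ)
    (h : ∀ n, 0 < n → ∀ E : Fin n → Finset ℕ, Consec E → (∀ j, ¬ a.support ⊆ E j) →
      γ * (∑ j, N (restr (E j) a)) / (n : ℝ) ^ (1 / q) ≤ c) :
    N a ≤ max (⨆ i, |a i|) c := by
  have hγN : 0 ≤ γ * N a := mul_nonneg hγ₀.le (hN.nonneg a)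
  have hbound : ∀ x ∈ tiSet q γ N a, x ≤ max c (γ * N a) := by
    rintro x ⟨n, hn, E, hE, rfl⟩
    by_cases hall : ∀ j, ¬ a.support ⊆ E j
    · exact (h n hn E hE hall).trans (le_max_left _ _)
    push Not at hall
    obtain ⟨j₀, hj₀⟩ := hall
    have hsum : ∑ j, N (restr (E j) a) = N a := by
      rw [sum_eq_single_of_mem j₀ (mem_univ _) fun j _ hj => ?_,
        restr_eq_self_of_support_subset hj₀]
      rw [restr_eq_zero_of_disjoint ((hE.disjoint hj.symm).mono_left hj₀), hN.map_zero hq₁ hγ₀]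
    rw [hsum]
    exact (div_rpow_le_self hγN hq₀ hn).trans (le_max_right _ _)
  have hle : N a ≤ max (max (⨆ i, |a i|) c) (γ * N a) := calc
    N a = max (⨆ i, |a i|) (sSup (tiSet q γ N a)) := hN a
    _ ≤ max (⨆ i, |a i|) (max c (γ * N a)) :=
      max_le_max le_rfl (Real.sSup_le hbound (hγN.trans (le_max_right _ _)))
    _ = _ := (max_assoc _ _ _).symm
  rcases le_max_iff.1 hle with h' | h'
  · exact h'
  · have : N a = 0 := by nlinarith [hN.nonneg a]
    rw [this]
    exact (Real.iSup_nonneg fun i => abs_nonneg (a i)).trans (le_max_left _ _)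

lemma mul_sum_div_rpow_le_sum_abs (hN : TiEq q γ N) (hq₀ : 0 ≤ 1 / q) (hγ₀ : 0 < γ)
    (hγ₁ : γ < 1) (a : ℕ →₀ ℝ) {n : ℕ} (hn : 0 < n) {E : Fin n → Finset ℕ} (hE : Consec E)
    (hpiece : ∀ j, N (restr (E j) a) ≤ ∑ i ∈ (restr (E j) a).support, |restr (E j) a i|) :
    γ * (∑ j, N (restr (E j) a)) / (n : ℝ) ^ (1 / q) ≤ ∑ i ∈ a.support, |a i| := calc
  γ * (∑ j, N (restr (E j) a)) / (n : ℝ) ^ (1 / q) ≤ ∑ j, N (restr (E j) a) := by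
      have hS : 0 ≤ ∑ j, N (restr (E j) a) := sum_nonneg fun j _ => hN.nonneg _
      exact (div_rpow_le_self (by positivity) hq₀ hn).trans (mul_le_of_le_one_left hS hγ₁.le)
  _ ≤ ∑ j, ∑ i ∈ (restr (E j) a).support, |restr (E j) a i| := sum_le_sum fun j _ => hpiece j
  _ ≤ ∑ i ∈ a.support, |a i| := sum_sum_abs_restr_le _ (fun i _ j _ hij => hE.disjoint hij) a

lemma le_sum_abs (hN : TiEq q γ N) (hq₀ : 0 ≤ 1 / q) (hq₁ : 1 / q < 1) (hγ₀ : 0 < γ)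
    (hγ₁ : γ < 1) (a : ℕ →₀ ℝ) : N a ≤ ∑ i ∈ a.support, |a i| := by
  induction hk : #a.support using Nat.strong_induction_on generalizing a with
  | _ k ih =>
    refine (hN.le_max_of_forall_proper hq₀ hq₁ hγ₀ hγ₁ a _ fun n hn E hE hproper => ?_).trans
      (max_le (ciSup_le (abs_apply_le_sum_abs a)) le_rfl)
    exact hN.mul_sum_div_rpow_le_sum_abs hq₀ hγ₀ hγ₁ a hn hE fun j =>
      ih _ (hk ▸ card_support_restr_lt (hproper j)) _ rfl

lemma le_of_mem_tiSet (hN : TiEq q γ N) (hq₀ : 0 ≤ 1 / q) (hq₁ : 1 / q < 1) (hγ₀ : 0 < γ)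
    (hγ₁ : γ < 1) {a : ℕ →₀ ℝ} {x : ℝ} (hx : x ∈ tiSet q γ N a) : x ≤ N a := by
  have hbdd : BddAbove (tiSet q γ N a) := by
    refine ⟨∑ i ∈ a.support, |a i|, ?_⟩
    rintro x ⟨n, hn, E, hE, rfl⟩
    exact hN.mul_sum_div_rpow_le_sum_abs hq₀ hγ₀ hγ₁ a hn hE fun j =>
      hN.le_sum_abs hq₀ hq₁ hγ₀ hγ₁ _
  exact (le_csSup hbdd hx).trans ((hN a).symm ▸ le_max_right _ _)

lemma le_of_pairwise_lt (hN : TiEq q γ N) (hq₀ : 0 ≤ 1 / q) (hq₁ : 1 / q < 1) (hγ₀ : 0 < γ)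
    (hγ₁ : γ < 1) (a : ℕ →₀ ℝ) {n : ℕ} (E : Fin n → Finset ℕ)
    (hE : ∀ i j : Fin n, i < j → ∀ s ∈ E i, ∀ t ∈ E j, s < t) :
    γ * (∑ j, N (restr (E j) a)) / (n : ℝ) ^ (1 / q) ≤ N a := by
  set s : Finset (Fin n) := univ.filter fun j => (E j).Nonempty
  have hsum : ∑ j, N (restr (E j) a) = ∑ j ∈ s, N (restr (E j) a) := by
    refine (sum_subset (subset_univ s) fun j _ hj => ?_).symm
    rw [mem_filter, not_and, not_nonempty_iff_eq_empty] at hj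
    rw [hj (mem_univ j), restr_eq_zero_of_disjoint (disjoint_empty_right _), hN.map_zero hq₁ hγ₀]
  rcases s.eq_empty_or_nonempty with hs | hs
  · rw [hsum, hs, sum_empty, mul_zero, zero_div]
    exact hN.nonneg a
  set e := s.orderIsoOfFin rfl
  have hS : 0 ≤ ∑ j ∈ s, N (restr (E j) a) := sum_nonneg fun j _ => hN.nonneg _
  have hreindex : ∑ j ∈ s, N (restr (E j) a) = ∑ i, N (restr (E (e i)) a) := by
    rw [← sum_coe_sort s]
    exact (e.toEquiv.sum_comp fun j => N (restr (E j) a)).symm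
  have hconsec : Consec fun i => E (e i) :=
    ⟨fun i => (mem_filter.1 (e i).2).2, fun i j hij => hE _ _ (e.strictMono hij)⟩
  have hm : (0 : ℝ) < #s := Nat.cast_pos.2 hs.card_pos
  calc γ * (∑ j, N (restr (E j) a)) / (n : ℝ) ^ (1 / q)
      ≤ γ * (∑ j ∈ s, N (restr (E j) a)) / (#s : ℝ) ^ (1 / q) := by
        rw [hsum]
        refine div_le_div_of_nonneg_left (by positivity) (by positivity)
          (Real.rpow_le_rpow hm.le ?_ hq₀)
        exact_mod_cast (card_le_univ s).trans_eq (Fintype.card_fin n)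
    _ ≤ N a := hN.le_of_mem_tiSet hq₀ hq₁ hγ₀ hγ₁ ⟨_, hs.card_pos, _, hconsec, by rw [hreindex]⟩

theorem map_embDomain (hN : TiEq q γ N) (hq₀ : 0 ≤ 1 / q) (hq₁ : 1 / q < 1) (hγ₀ : 0 < γ)
    (hγ₁ : γ < 1) (f : ℕ ↪o ℕ) (a : ℕ →₀ ℝ) : N (a.embDomain f.toEmbedding) = N a := by
  induction hk : #a.support using Nat.strong_induction_on generalizing a with
  | _ k ih =>
    set g : ℕ ↪ ℕ := f.toEmbedding
    set b := a.embDomain g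
    have hpiece (E : Finset ℕ) (hE : ¬ a.support ⊆ E.preimage g g.injective.injOn) :
        N (restr E b) = N (restr (E.preimage g g.injective.injOn) a) := by
      rw [restr_embDomain]
      exact ih _ (hk ▸ card_support_restr_lt hE) _ rfl
    have hsup : ⨆ i, |b i| = ⨆ i, |a i| := iSup_abs_embDomain _ a
    apply le_antisymm
    · refine (hN.le_max_of_forall_proper hq₀ hq₁ hγ₀ hγ₁ b (N a)
        fun n hn E hE hproper => ?_).trans (max_le (hsup ▸ hN.iSup_abs_le a) le_rfl)
      have hproper' (j : Fin n) : ¬ a.support ⊆ (E j).preimage g g.injective.injOn := by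
        rw [← map_subset_iff_subset_preimage]
        exact hproper j
      rw [sum_congr rfl fun j _ => hpiece _ (hproper' j)]
      exact hN.le_of_pairwise_lt hq₀ hq₁ hγ₀ hγ₁ a _ fun i j hij s hs t ht =>
        f.lt_iff_lt.1 (hE.2 i j hij _ (mem_preimage.1 hs) _ (mem_preimage.1 ht))
    · refine (hN.le_max_of_forall_proper hq₀ hq₁ hγ₀ hγ₁ a (N b)
        fun n hn F hF hproper => ?_).trans (max_le (hsup ▸ hN.iSup_abs_le b) le_rfl)
      have hpiece' (j : Fin n) : N (restr ((F j).map g) b) = N (restr (F j) a) := by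
        rw [hpiece _ (by rw [preimage_map]; exact hproper j), preimage_map]
      have hconsec : Consec fun j => (F j).map g := by
        refine ⟨fun j => (hF.1 j).map, fun i j hij s hs t ht => ?_⟩
        obtain ⟨u, hu, rfl⟩ := mem_map.1 hs
        obtain ⟨v, hv, rfl⟩ := mem_map.1 ht
        exact f.lt_iff_lt.2 (hF.2 i j hij u hu v hv)
      exact hN.le_of_mem_tiSet hq₀ hq₁ hγ₀ hγ₁ ⟨n, hn, _, hconsec, by simp only [hpiece']⟩

end TiEq

/-- the unit vector basis of `Ti(p,γ)` is 1-subsymmetric: spreading the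
coefficients of `a` along any strictly increasing map preserves the norm. -/
theorem stmt2 (p q γ : ℝ) (hp : 1 < p) (hpq : 1 / p + 1 / q = 1)
    (hγ0 : 0 < γ) (hγ1 : γ < 1) (N : (ℕ →₀ ℝ) → ℝ) (hN : TiEq q γ N)
    (π : ℕ → ℕ) (hπ : StrictMono π) (a b : ℕ →₀ ℝ)
    (hb1 : ∀ n, b (π n) = a n) (hb2 : ∀ k, k ∉ Set.range π → b k = 0) :
    N b = N a := by
  have hp₀ : 0 < 1 / p := by positivity
  have hp₁ : 1 / p < 1 := (div_lt_one (by linarith)).2 hp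
  set f := OrderEmbedding.ofStrictMono π hπ
  have hb : b = a.embDomain f.toEmbedding := by
    ext k
    by_cases hk : k ∈ Set.range π
    · obtain ⟨m, rfl⟩ := hk
      exact (hb1 m).trans (Finsupp.embDomain_apply_self f.toEmbedding a m).symm
    · exact (hb2 k hk).trans (Finsupp.embDomain_of_notMem_range _ _ _ hk).symm
  rw [hb, hN.map_embDomain (by linarith) (by linarith) hγ0 hγ1]
end
end

section
/- Let X be a reflexive Banach space with a 1-unconditional normalized basis (eᵢ) such that (eᵢ) is K-dominated by every normalized block basis of (eᵢ) (K ≥ 1). Then in X* the dual basis (eᵢ*) K-dominates every normalized block basis (xᵢ*) of (eᵢ*): for all n and scalars (aᵢ), ‖∑ᵢ₌₁ⁿ aᵢ xᵢ*‖ ≤ K‖∑ᵢ₌₁ⁿ aᵢ eᵢ*‖. -/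
/-!
Let `F = ∑ aⱼ xⱼ*` and `G = ∑ aⱼ eⱼ*`. For a finitely supported `w`, put `vⱼ = w|_{Aⱼ}` and
`dⱼ = xⱼ*(w) = xⱼ*(vⱼ)`, so `|dⱼ| ≤ ‖vⱼ‖` and `F(w) = G(∑ dⱼ eⱼ)`. By 1-unconditionality
`‖∑ dⱼ eⱼ‖ ≤ ‖∑ ‖vⱼ‖ eⱼ‖`; writing `vⱼ = ‖vⱼ‖ zⱼ` with `(zⱼ)` a normalized block basis, the
domination gives `‖∑ ‖vⱼ‖ eⱼ‖ ≤ K ‖∑ vⱼ‖ ≤ K ‖w‖`. Hence `|F(w)| ≤ K ‖G‖ ‖w‖` on a dense set.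
-/

open Finset Function

theorem ContinuousLinearMap.opNorm_le_of_denseRange {𝕜 E F ι : Type*} [NontriviallyNormedField 𝕜]
    [SeminormedAddCommGroup E] [NormedSpace 𝕜 E] [SeminormedAddCommGroup F] [NormedSpace 𝕜 F]
    (f : E →L[𝕜] F) {g : ι → E} (hg : DenseRange g) {C : ℝ} (hC : 0 ≤ C)
    (h : ∀ i, ‖f (g i)‖ ≤ C * ‖g i‖) : ‖f‖ ≤ C :=
  f.opNorm_le_bound hC fun x =>
    hg.induction_on x (isClosed_le f.continuous.norm (continuous_const.mul continuous_norm)) h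

theorem pairwise_disjoint_of_forall_lt {A : ℕ → Finset ℕ}
    (hA : ∀ j k : ℕ, j < k → ∀ s ∈ A j, ∀ t ∈ A k, s < t) : Pairwise (Disjoint on A) := by
  intro j k hjk
  refine Finset.disjoint_left.2 fun i hij hik => ?_
  rcases hjk.lt_or_gt with h | h
  · exact lt_irrefl i (hA j k h i hij i hik)
  · exact lt_irrefl i (hA k j h i hik i hij)

theorem exists_eq_on_pairwise_disjoint {ι α β : Type*} [Zero β] {A : ι → Finset α}
    (hA : Pairwise (Disjoint on A)) (γ : ι → α → β) :
    ∃ c : α → β, ∀ j, ∀ i ∈ A j, c i = γ j i := by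
  classical
  refine ⟨fun i => if h : ∃ j, i ∈ A j then γ h.choose i else 0, fun j i hi => ?_⟩
  have h : ∃ j, i ∈ A j := ⟨j, hi⟩
  have hj : h.choose = j := by
    by_contra hne
    exact Finset.disjoint_left.1 (hA hne) h.choose_spec hi
  simp only [dif_pos h, hj]

section

variable {X : Type*} [NormedAddCommGroup X] [NormedSpace ℝ X] {e : ℕ → X}

theorem apply_sum_smul_eq_of_apply_eq_zero {M F : Type*} [AddCommMonoid M] [Module ℝ M]
    [FunLike F X M] [LinearMapClass F ℝ X M] (f : F) {A S : Finset ℕ}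
    (hf : ∀ i ∉ A, f (e i) = 0) {q : ℕ → ℝ} (hq : ∀ i ∉ S, q i = 0) :
    f (∑ i ∈ S, q i • e i) = f (∑ i ∈ A, q i • e i) := by
  have hsupp : Function.support (fun i => q i • f (e i)) ⊆ ↑(A ∩ S) := by
    refine Function.support_subset_iff'.2 fun i hi => ?_
    rcases not_and_or.1 (mt mem_inter.2 hi) with hiA | hiS
    · rw [hf i hiA, smul_zero]
    · rw [hq i hiS, zero_smul]
  simp only [map_sum, map_smul]
  rw [← finsum_eq_sum_of_support_subset _ (hsupp.trans (by simp)),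
    ← finsum_eq_sum_of_support_subset _ (hsupp.trans (by simp))]

variable (e) in
def IsOneUnconditional : Prop :=
  ∀ (s : Finset ℕ) (a ε : ℕ → ℝ), (∀ n, ε n = 1 ∨ ε n = -1) →
    ‖∑ i ∈ s, (ε i * a i) • e i‖ = ‖∑ i ∈ s, a i • e i‖

variable (e) in
def IsDominatedByNormalizedBlocks (K : ℝ) : Prop :=
  ∀ (z : ℕ → X) (B : ℕ → Finset ℕ) (c : ℕ → ℝ),
    (∀ j, z j = ∑ i ∈ B j, c i • e i) → (∀ j, (B j).Nonempty) →
    (∀ j k : ℕ, j < k → ∀ s ∈ B j, ∀ t ∈ B k, s < t) → (∀ j, ‖z j‖ = 1) →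
    ∀ (n : ℕ) (a : Fin n → ℝ), ‖∑ j, a j • e (j : ℕ)‖ ≤ K * ‖∑ j, a j • z (j : ℕ)‖

namespace IsOneUnconditional

variable (hu : IsOneUnconditional e)
include hu

theorem norm_sum_mul_smul_le (s : Finset ℕ) (a θ : ℕ → ℝ) (hθ : ∀ i ∈ s, θ i ∈ Set.Icc (-1) 1) :
    ‖∑ i ∈ s, (θ i * a i) • e i‖ ≤ ‖∑ i ∈ s, a i • e i‖ := by
  let L : (s → ℝ) →ₗ[ℝ] X := ∑ i : s, (LinearMap.proj i).smulRight (a i • e i)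
  have hL : ∀ θ, L θ = ∑ i : s, (θ i * a i) • e i := by
    intro θ; simp [L, mul_smul]
  have hθ' : (fun i : s => θ i) ∈ convexHull ℝ (Set.univ.pi fun _ => {-1, 1}) := by
    rw [convexHull_pi, Set.mem_univ_pi]
    intro i
    rw [convexHull_pair, segment_eq_Icc (by norm_num)]
    exact hθ i i.2
  obtain ⟨ε, hε, hle⟩ := (convexOn_univ_norm.comp_linearMap L).exists_ge_of_mem_convexHull
    (Set.subset_univ _) hθ'
  let σ : ℕ → ℝ := fun n => if h : n ∈ s then ε ⟨n, h⟩ else 1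
  have hσ : ∀ n, σ n = 1 ∨ σ n = -1 := by
    intro n
    by_cases hn : n ∈ s
    · simpa [σ, hn, or_comm] using hε ⟨n, hn⟩ trivial
    · simp [σ, hn]
  calc ‖∑ i ∈ s, (θ i * a i) • e i‖ ≤ ‖∑ i ∈ s, (σ i * a i) • e i‖ := by
        simpa [hL, σ, ← sum_coe_sort s] using hle
    _ = ‖∑ i ∈ s, a i • e i‖ := hu s a σ hσ

theorem norm_sum_smul_le_of_abs_le {s : Finset ℕ} {c d : ℕ → ℝ} (h : ∀ i ∈ s, |d i| ≤ |c i|) :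
    ‖∑ i ∈ s, d i • e i‖ ≤ ‖∑ i ∈ s, c i • e i‖ := by
  have hdc : ∀ i ∈ s, d i / c i * c i = d i := by
    intro i hi
    by_cases hc : c i = 0
    · simpa [hc, eq_comm] using h i hi
    · exact div_mul_cancel₀ _ hc
  calc ‖∑ i ∈ s, d i • e i‖ = ‖∑ i ∈ s, (d i / c i * c i) • e i‖ := by
        rw [sum_congr rfl fun i hi => by rw [← hdc i hi]]
    _ ≤ ‖∑ i ∈ s, c i • e i‖ := hu.norm_sum_mul_smul_le s c _ fun i hi =>
        abs_le.1 (by rw [abs_div]; exact div_le_one_of_le₀ (h i hi) (abs_nonneg _))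

theorem norm_sum_smul_le_of_eq_zero {S : Finset ℕ} {q : ℕ → ℝ} (hq : ∀ i ∉ S, q i = 0)
    (T : Finset ℕ) : ‖∑ i ∈ T, q i • e i‖ ≤ ‖∑ i ∈ S, q i • e i‖ := by
  classical
  have hT : ∑ i ∈ T, q i • e i = ∑ i ∈ S, (if i ∈ T then q i else 0) • e i := by
    simp only [ite_smul, zero_smul, sum_ite_mem]
    refine (sum_subset inter_subset_right fun i hiT hi => ?_).symm
    rw [hq i fun hiS => hi (mem_inter.2 ⟨hiS, hiT⟩), zero_smul]
  rw [hT]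
  exact hu.norm_sum_smul_le_of_abs_le fun i _ => by split_ifs <;> simp

end IsOneUnconditional

theorem exists_normalized_block (henorm : ∀ i, ‖e i‖ = 1) {B : Finset ℕ} (hB : B.Nonempty)
    (q : ℕ → ℝ) : ∃ γ : ℕ → ℝ, ‖∑ i ∈ B, γ i • e i‖ = 1 ∧
      ‖∑ i ∈ B, q i • e i‖ • ∑ i ∈ B, γ i • e i = ∑ i ∈ B, q i • e i := by
  set v := ∑ i ∈ B, q i • e i with hv_def
  by_cases hv : v = 0
  · obtain ⟨m, hm⟩ := hB
    refine ⟨fun i => if i = m then 1 else 0, ?_, by rw [hv, norm_zero, zero_smul]⟩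
    simp [ite_smul, hm, henorm]
  · refine ⟨fun i => ‖v‖⁻¹ * q i, ?_, ?_⟩ <;>
      simp only [mul_smul, ← smul_sum, ← hv_def]
    · rw [norm_smul, norm_inv, norm_norm, inv_mul_cancel₀ (norm_ne_zero_iff.2 hv)]
    · exact smul_inv_smul₀ (norm_ne_zero_iff.2 hv) v

theorem norm_sum_norm_smul_le_of_dominated {K : ℝ} (henorm : ∀ i, ‖e i‖ = 1)
    (hdom : IsDominatedByNormalizedBlocks e K)
    {A : ℕ → Finset ℕ} (hAne : ∀ j, (A j).Nonempty)
    (hA : ∀ j k : ℕ, j < k → ∀ s ∈ A j, ∀ t ∈ A k, s < t) (q : ℕ → ℝ) (n : ℕ) :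
    ‖∑ j : Fin n, ‖∑ i ∈ A j, q i • e i‖ • e (j : ℕ)‖ ≤
      K * ‖∑ j : Fin n, ∑ i ∈ A j, q i • e i‖ := by
  choose γ hγ_norm hγ_smul using fun j => exists_normalized_block henorm (hAne j) q
  obtain ⟨c, hc⟩ := exists_eq_on_pairwise_disjoint (pairwise_disjoint_of_forall_lt hA) γ
  have hz : ∀ j, ∑ i ∈ A j, γ j i • e i = ∑ i ∈ A j, c i • e i := fun j =>
    sum_congr rfl fun i hi => by rw [hc j i hi]
  simpa only [hγ_smul] using hdom _ A c hz hAne hA hγ_norm n fun j => ‖∑ i ∈ A j, q i • e i‖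

section Biorthogonal

variable {b : ℕ → X →L[ℝ] ℝ} (hbio : ∀ i j, b i (e j) = if i = j then 1 else 0)
include hbio

theorem apply_sum_smul_of_biorthogonal (s : Finset ℕ) (d : ℕ → ℝ) (i : ℕ) :
    b i (∑ k ∈ s, d k • e k) = if i ∈ s then d i else 0 := by
  simp [hbio]

theorem sum_smul_apply_of_biorthogonal (A : Finset ℕ) (co : ℕ → ℝ) (i : ℕ) :
    (∑ k ∈ A, co k • b k) (e i) = if i ∈ A then co i else 0 := by
  simp [hbio]

theorem norm_apply_sum_smul_le_of_block_dual {K : ℝ} (hK : 0 ≤ K) (henorm : ∀ i, ‖e i‖ = 1)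
    (hu : IsOneUnconditional e)
    (hdom : IsDominatedByNormalizedBlocks e K)
    {xs : ℕ → X →L[ℝ] ℝ} {A : ℕ → Finset ℕ} (hxs : ∀ j, ∀ i ∉ A j, xs j (e i) = 0)
    (hAne : ∀ j, (A j).Nonempty) (hA : ∀ j k : ℕ, j < k → ∀ s ∈ A j, ∀ t ∈ A k, s < t)
    (hxn : ∀ j, ‖xs j‖ = 1) (n : ℕ) (a : Fin n → ℝ) {S : Finset ℕ} {q : ℕ → ℝ}
    (hq : ∀ i ∉ S, q i = 0) :
    ‖(∑ j : Fin n, a j • xs j) (∑ i ∈ S, q i • e i)‖ ≤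
      K * ‖∑ j : Fin n, a j • b j‖ * ‖∑ i ∈ S, q i • e i‖ := by
  set w := ∑ i ∈ S, q i • e i
  set v : ℕ → X := fun j => ∑ i ∈ A j, q i • e i
  have hxw : ∀ j, xs j w = xs j (v j) := fun j =>
    apply_sum_smul_eq_of_apply_eq_zero (xs j) (hxs j) hq
  have hxv : ∀ j, |xs j w| ≤ ‖v j‖ := fun j => by
    rw [← Real.norm_eq_abs, hxw]
    simpa [hxn j] using (xs j).le_opNorm (v j)
  have hFw : (∑ j : Fin n, a j • xs j) w =
      (∑ j : Fin n, a j • b j) (∑ k : Fin n, xs k w • e k) := by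
    rw [Fin.sum_univ_eq_sum_range (fun k => xs k w • e k)]
    simp only [_root_.sum_apply, _root_.smul_apply,
      apply_sum_smul_of_biorthogonal hbio, mem_range, Fin.is_lt, if_true]
  have hlat : ‖∑ k : Fin n, xs k w • e k‖ ≤ ‖∑ k : Fin n, ‖v k‖ • e k‖ := by
    rw [Fin.sum_univ_eq_sum_range (fun k => xs k w • e k),
      Fin.sum_univ_eq_sum_range (fun k => ‖v k‖ • e k)]
    exact hu.norm_sum_smul_le_of_abs_le fun k _ => (hxv k).trans (le_abs_self _)
  have hproj : ‖∑ j : Fin n, v j‖ ≤ ‖w‖ := by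
    rw [Fin.sum_univ_eq_sum_range v,
      ← sum_biUnion ((pairwise_disjoint_of_forall_lt hA).set_pairwise _)]
    exact hu.norm_sum_smul_le_of_eq_zero hq _
  calc ‖(∑ j : Fin n, a j • xs j) w‖
      = ‖(∑ j : Fin n, a j • b j) (∑ k : Fin n, xs k w • e k)‖ := by rw [hFw]
    _ ≤ ‖∑ j : Fin n, a j • b j‖ * ‖∑ k : Fin n, xs k w • e k‖ := ContinuousLinearMap.le_opNorm _ _
    _ ≤ ‖∑ j : Fin n, a j • b j‖ * (K * ‖w‖) := by
      gcongr
      exact hlat.trans ((norm_sum_norm_smul_le_of_dominated henorm hdom hAne hA q n).trans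
        (by gcongr))
    _ = K * ‖∑ j : Fin n, a j • b j‖ * ‖w‖ := by ring

end Biorthogonal

end

theorem stmt7_general {X : Type*} [NormedAddCommGroup X] [NormedSpace ℝ X]
    (K : ℝ) (hK : 1 ≤ K)
    (e : ℕ → X) (b : ℕ → X →L[ℝ] ℝ)
    (henorm : ∀ i, ‖e i‖ = 1)
    (hbio : ∀ i j, b i (e j) = if i = j then 1 else 0)
    (hdense : DenseRange fun a : ℕ →₀ ℝ => a.sum fun i c => c • e i)
    (huncond : ∀ (s : Finset ℕ) (a ε : ℕ → ℝ), (∀ n, ε n = 1 ∨ ε n = -1) →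
      ‖∑ i ∈ s, (ε i * a i) • e i‖ = ‖∑ i ∈ s, a i • e i‖)
    (hdom : ∀ (z : ℕ → X) (B : ℕ → Finset ℕ) (c : ℕ → ℝ),
      (∀ j, z j = ∑ i ∈ B j, c i • e i) → (∀ j, (B j).Nonempty) →
      (∀ j k : ℕ, j < k → ∀ s ∈ B j, ∀ t ∈ B k, s < t) → (∀ j, ‖z j‖ = 1) →
      ∀ (n : ℕ) (a : Fin n → ℝ), ‖∑ j, a j • e (j : ℕ)‖ ≤ K * ‖∑ j, a j • z (j : ℕ)‖)
    (xs : ℕ → X →L[ℝ] ℝ) (A : ℕ → Finset ℕ) (co : ℕ → ℝ)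
    (hxs : ∀ j, xs j = ∑ i ∈ A j, co i • b i)
    (hAne : ∀ j, (A j).Nonempty)
    (hA : ∀ j k : ℕ, j < k → ∀ s ∈ A j, ∀ t ∈ A k, s < t)
    (hxn : ∀ j, ‖xs j‖ = 1) :
    ∀ (n : ℕ) (a : Fin n → ℝ),
      ‖∑ j, a j • xs (j : ℕ)‖ ≤ K * ‖∑ j, a j • b (j : ℕ)‖ := by
  intro n a
  have hK0 : 0 ≤ K := zero_le_one.trans hK
  have hxs_supp : ∀ j, ∀ i ∉ A j, xs j (e i) = 0 := fun j i hi => by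
    rw [hxs, sum_smul_apply_of_biorthogonal hbio, if_neg hi]
  refine ContinuousLinearMap.opNorm_le_of_denseRange _ hdense (by positivity) fun q => ?_
  exact norm_apply_sum_smul_le_of_block_dual hbio hK0 henorm huncond hdom hxs_supp hAne hA hxn
    n a fun i hi => Finsupp.notMem_support_iff.1 hi

/-- if `X` is a reflexive Banach space with a 1-unconditional normalized basis
`(eᵢ)` which is `K`-dominated by every normalized block basis of `(eᵢ)`, then in `X^*` the
dual basis `(bᵢ)` `K`-dominates every normalized block basis `(xsᵢ)` of `(bᵢ)`. -/
theorem stmt7 {X : Type*} [NormedAddCommGroup X] [NormedSpace ℝ X] [CompleteSpace X]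
    (hrefl : Function.Surjective (NormedSpace.inclusionInDoubleDual ℝ X))
    (K : ℝ) (hK : 1 ≤ K)
    (e : ℕ → X) (b : ℕ → X →L[ℝ] ℝ)
    (henorm : ∀ i, ‖e i‖ = 1)
    (hbio : ∀ i j, b i (e j) = if i = j then 1 else 0)
    (hdense : DenseRange fun a : ℕ →₀ ℝ => a.sum fun i c => c • e i)
    (huncond : ∀ (s : Finset ℕ) (a ε : ℕ → ℝ), (∀ n, ε n = 1 ∨ ε n = -1) →
      ‖∑ i ∈ s, (ε i * a i) • e i‖ = ‖∑ i ∈ s, a i • e i‖)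
    (hdom : ∀ (z : ℕ → X) (B : ℕ → Finset ℕ) (c : ℕ → ℝ),
      (∀ j, z j = ∑ i ∈ B j, c i • e i) → (∀ j, (B j).Nonempty) →
      (∀ j k : ℕ, j < k → ∀ s ∈ B j, ∀ t ∈ B k, s < t) → (∀ j, ‖z j‖ = 1) →
      ∀ (n : ℕ) (a : Fin n → ℝ), ‖∑ j, a j • e (j : ℕ)‖ ≤ K * ‖∑ j, a j • z (j : ℕ)‖)
    (xs : ℕ → X →L[ℝ] ℝ) (A : ℕ → Finset ℕ) (co : ℕ → ℝ)
    (hxs : ∀ j, xs j = ∑ i ∈ A j, co i • b i)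
    (hAne : ∀ j, (A j).Nonempty)
    (hA : ∀ j k : ℕ, j < k → ∀ s ∈ A j, ∀ t ∈ A k, s < t)
    (hxn : ∀ j, ‖xs j‖ = 1) :
    ∀ (n : ℕ) (a : Fin n → ℝ),
      ‖∑ j, a j • xs (j : ℕ)‖ ≤ K * ‖∑ j, a j • b (j : ℕ)‖ :=
  stmt7_general K hK e b henorm hbio hdense huncond hdom xs A co hxs hAne hA hxn
end
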